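/- Let R be a quasiorder on U and x ∈ U with |R(x)| ≥ 2. Then the pair (∅, {x}^▲) is a rough set (equals A({x})) and it is completely join-irreducible in the complete lattice RS: if (∅, {x}^▲) = ⋁_{i∈I} A(X_i) then (∅, {x}^▲) = A(X_i) for some i. -/

import Mathlib

variable {U : Type*}

/-- Lower approximation. -/
def low (R : U → U → Prop) (X : Set U) : Set U := {x | ∀ y, R x y → y ∈ X}

/-- Upper approximation. -/
def upp (R : U → U → Prop) (X : Set U) : Set U := {x | ∃ y, R x y ∧ y ∈ X}

/-
The lower approximation of `{x}` is empty since any of its points `w` satisfies `R(w) = {x}`,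
so `w = x` and `R(x)` would be a singleton. For irreducibility, `x ∈ {x}^▲` lies in some
`X_i^▲`, witnessed by `y ∈ R(x) ∩ X_i`; by transitivity every `w` with `x ∈ R(w)` also sees `y`,
so `{x}^▲ ⊆ X_i^▲`, while the reverse inclusion and `X_i^▼ = ∅` come from the join.
-/

section Approximations

variable {R : U → U → Prop}

theorem low_singleton_eq_empty (hrefl : ∀ a, R a a) {x y z : U}
    (hxy : R x y) (hxz : R x z) (hyz : y ≠ z) : low R {x} = ∅ := by
  refine Set.eq_empty_of_forall_notMem fun w hw => hyz ?_
  obtain rfl : w = x := hw w (hrefl w)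
  exact (hw y hxy).trans (hw z hxz).symm

theorem subset_upp (hrefl : ∀ a, R a a) (X : Set U) : X ⊆ upp R X :=
  fun a ha => ⟨a, hrefl a, ha⟩

theorem upp_singleton_subset_upp (htrans : ∀ ⦃a b c⦄, R a b → R b c → R a c) {x y : U}
    {X : Set U} (hxy : R x y) (hy : y ∈ X) : upp R {x} ⊆ upp R X := by
  rintro w ⟨_, hwx, rfl⟩
  exact ⟨y, htrans hwx hxy, hy⟩

end Approximations

theorem singleton_join_irreducible (R : U → U → Prop)
    (hrefl : Reflexive R) (htrans : Transitive R) (x : U)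
    (hx : ∃ y z, R x y ∧ R x z ∧ y ≠ z) :
    low R {x} = ∅ ∧
    ∀ (I : Type*) (X : I → Set U),
      ((∅ : Set U) = ⋃ i, low R (X i) ∧ upp R {x} = ⋃ i, upp R (X i)) →
      ∃ i, low R (X i) = ∅ ∧ upp R (X i) = upp R {x} := by
  obtain ⟨y, z, hxy, hxz, hyz⟩ := hx
  refine ⟨low_singleton_eq_empty hrefl hxy hxz hyz, fun I X ⟨hlow, hupp⟩ => ?_⟩
  have hx_upp : x ∈ ⋃ i, upp R (X i) := hupp ▸ subset_upp hrefl {x} rfl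
  obtain ⟨i, w, hxw, hw⟩ := Set.mem_iUnion.mp hx_upp
  refine ⟨i, Set.subset_eq_empty (Set.subset_iUnion (fun j => low R (X j)) i) hlow.symm, ?_⟩
  exact (hupp ▸ Set.subset_iUnion (fun j => upp R (X j)) i).antisymm
    (upp_singleton_subset_upp htrans hxw hw)
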